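/- For s = (s_1,...,s_d) positive integers, n ≥ 1, and real numbers a and p, the binomial mean M_n = ∑_{k=1}^n C(n,k) p^k (1-p)^{n-k} ζ_k^⋆(s_1,...,s_d; a) equals ∑_{n ≥ n_1 ≥ ... ≥ n_w ≥ 1} [∏_{r=1}^d (1-p)^{n_{l(r-1)+1} - n_{l(r)}}] ((1-p+ap)^{n_w} - (1-p)^{n_w}) / (n_1 ··· n_w), where w = s_1+...+s_d and l(i) = s_1+...+s_i. -/

import Mathlib

/-- Weakly decreasing chains `hi ≥ f 0 ≥ f 1 ≥ ⋯ ≥ f (d-1) ≥ lo`. -/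
def chainsIcc (d lo hi : ℕ) : Finset (Fin d → ℕ) :=
  (Fintype.piFinset fun _ : Fin d => Finset.Icc lo hi).filter
    fun f => ∀ i j : Fin d, i ≤ j → f j ≤ f i

/-- `idx f j` is the paper's `n_j` (1-indexed entry of the chain `f`). -/
def idx {w : ℕ} (f : Fin w → ℕ) (j : ℕ) : ℕ :=
  if h : j - 1 < w then f ⟨j - 1, h⟩ else 0

def lsum (s : ℕ → ℕ) (i : ℕ) : ℕ := ∑ j ∈ Finset.range i, s j

/-!
Write `q = 1 - p` and `T_{x,e} G b = ∑_{j=1}^{b} x^(b-j) G j / j^e`. Then `k ↦ ζ_k^⋆(s; a)` is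
`T_{1,s_1} ⋯ T_{1,s_d}` applied to `k ↦ a^k`, and by Pascal's rule the binomial mean `M` intertwines
these operators: `M (G / k) = T_{q,1} (M G)` and `M (T_{1,1} G) = T_{1,1} (M G)`, so that
`M (T_{1,s} G) = T_{1,1} T_{q,1}^(s-1) (M G)`, while `M (a^k) = (q + a p)^n - q^n` by the binomial
theorem. Unfolding the resulting composite of `w` operators gives a sum over chains
`n ≥ n_1 ≥ ⋯ ≥ n_w ≥ 1` in which the weights `q^(n_{i-1} - n_i)` of each block telescope to
`q^(n_{l(r-1)+1} - n_{l(r)})`.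
-/

open Finset

theorem sum_Icc_one_eq_sum_range {M : Type*} [AddCommMonoid M] (f : ℕ → M) (n : ℕ) :
    ∑ k ∈ Icc 1 n, f k = ∑ k ∈ range n, f (k + 1) := by
  rw [← Ico_add_one_right_eq_Icc, sum_Ico_eq_sum_range]
  simp [add_comm]

theorem sum_range_tsub_add_of_succ_le {N : ℕ → ℕ} {m : ℕ} (h : ∀ i < m, N (i + 1) ≤ N i) :
    ∑ i ∈ range m, (N i - N (i + 1)) + N m = N 0 := by
  induction m with
  | zero => simp
  | succ m ih =>
    have := ih fun i hi => h i (by omega)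
    have := h m m.lt_succ_self
    rw [sum_range_succ]
    omega

theorem mem_chainsIcc {d lo hi : ℕ} {f : Fin d → ℕ} :
    f ∈ chainsIcc d lo hi ↔ (∀ i, f i ∈ Icc lo hi) ∧ Antitone f := by
  simp [chainsIcc, Fintype.mem_piFinset, Antitone]

theorem cons_mem_chainsIcc {d lo hi j : ℕ} {g : Fin d → ℕ} :
    (Fin.cons j g : Fin (d + 1) → ℕ) ∈ chainsIcc (d + 1) lo hi ↔
      j ∈ Icc lo hi ∧ g ∈ chainsIcc d lo j := by
  simp only [mem_chainsIcc, Fin.forall_fin_succ, Fin.cons_zero, Fin.cons_succ, mem_Icc]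
  constructor
  · rintro ⟨⟨hj, hg⟩, hanti⟩
    refine ⟨hj, fun i => ⟨(hg i).1, hanti (Fin.zero_le i.succ)⟩, fun i i' h => ?_⟩
    simpa using hanti (Fin.succ_le_succ_iff.2 h)
  · rintro ⟨hj, hg, hanti⟩
    refine ⟨⟨hj, fun i => ⟨(hg i).1, (hg i).2.trans hj.2⟩⟩, fun a b hab => ?_⟩
    induction b using Fin.cases with
    | zero => rw [Fin.le_zero_iff.1 hab]
    | succ b =>
      induction a using Fin.cases with
      | zero => simpa using (hg b).2
      | succ a => simpa using hanti (Fin.succ_le_succ_iff.1 hab)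

theorem chainsIcc_zero (lo hi : ℕ) : chainsIcc 0 lo hi = {finZeroElim} := by
  ext f
  simp [mem_chainsIcc, Subsingleton.elim f finZeroElim, Antitone]

theorem sum_chainsIcc_succ {M : Type*} [AddCommMonoid M] (d lo hi : ℕ)
    (F : (Fin (d + 1) → ℕ) → M) :
    ∑ f ∈ chainsIcc (d + 1) lo hi, F f
      = ∑ j ∈ Icc lo hi, ∑ g ∈ chainsIcc d lo j, F (Fin.cons j g) := by
  rw [← sum_sigma (Icc lo hi) (chainsIcc d lo) fun x => F (Fin.cons x.1 x.2)]
  refine sum_nbij' (fun f => ⟨f 0, Fin.tail f⟩) (fun x => Fin.cons x.1 x.2) ?_ ?_ ?_ ?_ ?_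
  · intro f hf
    rw [← Fin.cons_self_tail f, cons_mem_chainsIcc] at hf
    simpa using hf
  · rintro ⟨j, g⟩ h
    simpa [cons_mem_chainsIcc] using h
  · intro f _
    simp
  · rintro ⟨j, g⟩ _
    simp
  · intro f _
    simp

noncomputable def binomialMean (p : ℝ) (G : ℕ → ℝ) (n : ℕ) : ℝ :=
  ∑ k ∈ Icc 1 n, (n.choose k : ℝ) * p ^ k * (1 - p) ^ (n - k) * G k

noncomputable def binomialShift (p : ℝ) (G : ℕ → ℝ) (n : ℕ) : ℝ :=
  ∑ k ∈ range (n + 1), (n.choose k : ℝ) * p ^ (k + 1) * (1 - p) ^ (n - k) * G (k + 1)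

noncomputable def harmonicOp (x : ℝ) (e : ℕ) (G : ℕ → ℝ) (b : ℕ) : ℝ :=
  ∑ j ∈ Icc 1 b, x ^ (b - j) * G j / (j : ℝ) ^ e

@[simp] theorem binomialMean_zero (p : ℝ) (G : ℕ → ℝ) : binomialMean p G 0 = 0 := by
  simp [binomialMean]

@[simp] theorem harmonicOp_zero (x : ℝ) (e : ℕ) (G : ℕ → ℝ) : harmonicOp x e G 0 = 0 := by
  simp [harmonicOp]

theorem harmonicOp_succ (x : ℝ) (e : ℕ) (G : ℕ → ℝ) (n : ℕ) :
    harmonicOp x e G (n + 1) = x * harmonicOp x e G n + G (n + 1) / ((n : ℝ) + 1) ^ e := by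
  rw [harmonicOp, sum_Icc_succ_top (by omega), harmonicOp, mul_sum]
  congr 1
  · refine sum_congr rfl fun j hj => ?_
    rw [show n + 1 - j = n - j + 1 by grind, pow_succ]
    ring
  · simp

theorem binomialMean_eq_sum_range (p : ℝ) {G : ℕ → ℝ} (hG : G 0 = 0) (n : ℕ) :
    binomialMean p G n
      = ∑ k ∈ range (n + 1), (n.choose k : ℝ) * p ^ k * (1 - p) ^ (n - k) * G k := by
  rw [binomialMean, sum_Icc_one_eq_sum_range, sum_range_succ']
  simp [hG]

theorem binomialMean_succ (p : ℝ) (G : ℕ → ℝ) (n : ℕ) :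
    binomialMean p G (n + 1) = (1 - p) * binomialMean p G n + binomialShift p G n := by
  have hchoose_succ : ∑ k ∈ range (n + 1),
        (n.choose (k + 1) : ℝ) * p ^ (k + 1) * (1 - p) ^ (n - k) * G (k + 1)
      = (1 - p) * binomialMean p G n := by
    rw [binomialMean, sum_Icc_one_eq_sum_range, sum_range_succ, Nat.choose_succ_self, mul_sum]
    simp only [Nat.cast_zero, zero_mul, add_zero]
    refine sum_congr rfl fun k hk => ?_
    rw [show n - k = n - (k + 1) + 1 by grind, pow_succ]
    ring
  rw [← hchoose_succ, binomialMean, sum_Icc_one_eq_sum_range, binomialShift, ← sum_add_distrib]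
  refine sum_congr rfl fun k _ => ?_
  rw [Nat.choose_succ_succ', Nat.add_sub_add_right]
  push_cast
  ring

theorem binomialMean_pow (p a : ℝ) (n : ℕ) :
    binomialMean p (fun k => a ^ k) n = (1 - p + a * p) ^ n - (1 - p) ^ n := by
  rw [binomialMean, sum_Icc_one_eq_sum_range, add_comm (1 - p), add_pow, sum_range_succ']
  simp only [pow_zero, one_mul, Nat.choose_zero_right, Nat.cast_one, mul_one, Nat.sub_zero,
    add_sub_cancel_right, mul_pow]
  refine sum_congr rfl fun k _ => ?_
  ring

theorem binomialShift_div (p : ℝ) (g : ℕ → ℝ) (n : ℕ) :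
    binomialShift p (fun k => g k / k) n = binomialMean p g (n + 1) / ((n : ℝ) + 1) := by
  rw [binomialShift, binomialMean, sum_Icc_one_eq_sum_range, sum_div]
  refine sum_congr rfl fun k _ => ?_
  have hchoose : ((n + 1 : ℕ) : ℝ) * n.choose k = (n + 1).choose (k + 1) * ((k + 1 : ℕ) : ℝ) := by
    exact_mod_cast Nat.add_one_mul_choose_eq n k
  push_cast at hchoose ⊢
  field_simp
  linear_combination p ^ (k + 1) * (1 - p) ^ (n - k) * g (k + 1) * hchoose

theorem binomialShift_eq_of_succ {F h : ℕ → ℝ} (hF : ∀ k, F (k + 1) = F k + h (k + 1))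
    (hF0 : F 0 = 0) (p : ℝ) (n : ℕ) :
    binomialShift p F n = p * binomialMean p F n + binomialShift p h n := by
  rw [binomialShift, binomialShift, binomialMean_eq_sum_range p hF0, mul_sum, ← sum_add_distrib]
  refine sum_congr rfl fun k _ => ?_
  rw [hF]
  ring

theorem binomialMean_div_cast (p : ℝ) (g : ℕ → ℝ) :
    binomialMean p (fun k => g k / k) = harmonicOp (1 - p) 1 (binomialMean p g) := by
  funext n
  induction n with
  | zero => simp
  | succ n ih => rw [binomialMean_succ, harmonicOp_succ, ih, binomialShift_div, pow_one]

theorem binomialMean_harmonicOp_one (p : ℝ) (g : ℕ → ℝ) :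
    binomialMean p (harmonicOp 1 1 g) = harmonicOp 1 1 (binomialMean p g) := by
  have hstep (k : ℕ) : harmonicOp 1 1 g (k + 1) = harmonicOp 1 1 g k + g (k + 1) / ↑(k + 1) := by
    rw [harmonicOp_succ]
    push_cast
    ring
  funext n
  induction n with
  | zero => simp
  | succ n ih =>
    rw [binomialMean_succ, binomialShift_eq_of_succ (h := fun k => g k / k) hstep
      (harmonicOp_zero 1 1 g), binomialShift_div, harmonicOp_succ, ← ih]
    ring

theorem binomialMean_div_pow (p : ℝ) (g : ℕ → ℝ) (e : ℕ) :
    binomialMean p (fun k => g k / (k : ℝ) ^ e)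
      = (harmonicOp (1 - p) 1)^[e] (binomialMean p g) := by
  induction e with
  | zero => simp
  | succ e ih =>
    simp only [pow_succ, ← div_div]
    rw [Function.iterate_succ_apply', ← ih, ← binomialMean_div_cast]

theorem binomialMean_harmonicOp (p : ℝ) (g : ℕ → ℝ) (e : ℕ) :
    binomialMean p (harmonicOp 1 (e + 1) g)
      = harmonicOp 1 1 ((harmonicOp (1 - p) 1)^[e] (binomialMean p g)) := by
  have hsplit : harmonicOp 1 (e + 1) g = harmonicOp 1 1 (fun k => g k / (k : ℝ) ^ e) := by
    funext b
    unfold harmonicOp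
    refine sum_congr rfl fun j _ => ?_
    ring
  rw [hsplit, binomialMean_harmonicOp_one, binomialMean_div_pow]

noncomputable def nestedHarmonic (x : ℕ → ℝ) (e : ℕ → ℕ) : ℕ → (ℕ → ℝ) → ℕ → ℝ
  | 0, G => G
  | w + 1, G =>
    harmonicOp (x 0) (e 0) (nestedHarmonic (fun i => x (i + 1)) (fun i => e (i + 1)) w G)

/-- The chain `f` with `n_0 = n` prepended, indexed like `idx`: `topIdx n f i = n_i`. -/
def topIdx {w : ℕ} (n : ℕ) (f : Fin w → ℕ) (i : ℕ) : ℕ := if i = 0 then n else idx f i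

@[simp] theorem topIdx_zero {w : ℕ} (n : ℕ) (f : Fin w → ℕ) : topIdx n f 0 = n := rfl

theorem topIdx_of_ne_zero {w : ℕ} (n : ℕ) (f : Fin w → ℕ) {i : ℕ} (hi : i ≠ 0) :
    topIdx n f i = idx f i := if_neg hi

@[simp] theorem topIdx_cons_succ {w : ℕ} (n j : ℕ) (g : Fin w → ℕ) (i : ℕ) :
    topIdx n (Fin.cons j g : Fin (w + 1) → ℕ) (i + 1) = topIdx j g i := by
  rcases i with _ | i
  · simp [topIdx, idx]
  · by_cases hi : i < w
    · simp [topIdx, idx, hi]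
      exact Fin.cons_succ (α := fun _ => ℕ) j g ⟨i, hi⟩
    · simp [topIdx, idx, hi]

theorem topIdx_succ_le {w lo n : ℕ} {f : Fin w → ℕ} (hf : f ∈ chainsIcc w lo n) {i : ℕ}
    (hi : i < w) : topIdx n f (i + 1) ≤ topIdx n f i := by
  obtain ⟨hmem, hanti⟩ := mem_chainsIcc.1 hf
  rcases i with _ | i
  · simpa [topIdx, idx, hi] using (mem_Icc.1 (hmem ⟨0, hi⟩)).2
  · simp only [topIdx, idx, Nat.add_sub_cancel, hi, dite_true, add_eq_zero, one_ne_zero,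
      and_false, if_false, show i < w by omega]
    exact hanti (Fin.mk_le_mk.2 (Nat.le_succ i))

theorem nestedHarmonic_eq_sum_chainsIcc (x : ℕ → ℝ) (e : ℕ → ℕ) (w : ℕ) (G : ℕ → ℝ) (n : ℕ) :
    nestedHarmonic x e w G n = ∑ f ∈ chainsIcc w 1 n,
      (∏ i ∈ range w, x i ^ (topIdx n f i - topIdx n f (i + 1)) /
        (topIdx n f (i + 1) : ℝ) ^ e i) * G (topIdx n f w) := by
  induction w generalizing x e n with
  | zero => simp [nestedHarmonic, chainsIcc_zero]
  | succ w ih =>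
    rw [nestedHarmonic, harmonicOp, sum_chainsIcc_succ]
    refine sum_congr rfl fun j _ => ?_
    rw [ih, mul_sum, sum_div]
    refine sum_congr rfl fun g _ => ?_
    simp only [prod_range_succ', topIdx_cons_succ, topIdx_zero]
    ring

theorem nestedHarmonic_add (x : ℕ → ℝ) (e : ℕ → ℕ) (m w : ℕ) (G : ℕ → ℝ) :
    nestedHarmonic x e (m + w) G
      = nestedHarmonic x e m (nestedHarmonic (fun i => x (m + i)) (fun i => e (m + i)) w G) := by
  induction m generalizing x e with
  | zero => simp [nestedHarmonic]
  | succ m ih =>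
    rw [Nat.add_right_comm, nestedHarmonic, nestedHarmonic, ih]
    simp only [Nat.add_right_comm _ 1, add_assoc]

theorem nestedHarmonic_const (x : ℝ) (e w : ℕ) (G : ℕ → ℝ) :
    nestedHarmonic (fun _ => x) (fun _ => e) w G = (harmonicOp x e)^[w] G := by
  induction w with
  | zero => rfl
  | succ w ih => rw [nestedHarmonic, ih, Function.iterate_succ_apply']

theorem nestedHarmonic_congr {x y : ℕ → ℝ} (e : ℕ → ℕ) {w : ℕ} (h : ∀ i < w, x i = y i)
    (G : ℕ → ℝ) : nestedHarmonic x e w G = nestedHarmonic y e w G := by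
  induction w generalizing x y e with
  | zero => rfl
  | succ w ih =>
    rw [nestedHarmonic, nestedHarmonic, h 0 w.succ_pos, ih _ fun i hi => h (i + 1) (by omega)]

theorem lsum_zero (s : ℕ → ℕ) : lsum s 0 = 0 := rfl

theorem lsum_succ' (s : ℕ → ℕ) (r : ℕ) : lsum s (r + 1) = s 0 + lsum (fun i => s (i + 1)) r := by
  rw [lsum, sum_range_succ', add_comm, lsum]

open Classical in
/-- Step `i` of a chain goes from `n_i` to `n_(i+1)`; block `r` of `s` consists of the steps
`lsum s r ≤ i < lsum s (r + 1)`, and only its first step has weight `1`. -/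
noncomputable def blockWeight (q : ℝ) (s : ℕ → ℕ) (i : ℕ) : ℝ :=
  if i ∈ Set.range (lsum s) then 1 else q

theorem blockWeight_zero (q : ℝ) (s : ℕ → ℕ) : blockWeight q s 0 = 1 :=
  if_pos ⟨0, lsum_zero s⟩

theorem blockWeight_of_lt (q : ℝ) {s : ℕ → ℕ} {i : ℕ} (hi : 0 < i) (his : i < s 0) :
    blockWeight q s i = q := by
  refine if_neg ?_
  rintro ⟨_ | r, hr⟩
  · rw [lsum_zero] at hr
    omega
  · rw [lsum_succ'] at hr
    omega

theorem blockWeight_add (q : ℝ) {s : ℕ → ℕ} (hs : 1 ≤ s 0) (i : ℕ) :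
    blockWeight q s (s 0 + i) = blockWeight q (fun i => s (i + 1)) i := by
  have hrange : s 0 + i ∈ Set.range (lsum s) ↔ i ∈ Set.range (lsum fun i => s (i + 1)) := by
    constructor
    · rintro ⟨_ | r, hr⟩
      · rw [lsum_zero] at hr
        omega
      · exact ⟨r, by rw [lsum_succ'] at hr; omega⟩
    · rintro ⟨r, rfl⟩
      exact ⟨r + 1, lsum_succ' s r⟩
  unfold blockWeight
  classical
  exact if_congr hrange rfl rfl

theorem binomialMean_nestedHarmonic (p : ℝ) (s : ℕ → ℕ) (d : ℕ) (hs : ∀ i < d, 1 ≤ s i)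
    (H : ℕ → ℝ) :
    binomialMean p (nestedHarmonic (fun _ => 1) s d H)
      = nestedHarmonic (blockWeight (1 - p) s) (fun _ => 1) (lsum s d) (binomialMean p H) := by
  induction d generalizing s with
  | zero => rfl
  | succ d ih =>
    obtain ⟨e, he⟩ : ∃ e, s 0 = e + 1 := ⟨s 0 - 1, by have := hs 0 d.succ_pos; omega⟩
    have hfirst (M : ℕ → ℝ) : nestedHarmonic (blockWeight (1 - p) s) (fun _ => 1) (e + 1) M
        = harmonicOp 1 1 ((harmonicOp (1 - p) 1)^[e] M) := by
      rw [nestedHarmonic, blockWeight_zero, ← nestedHarmonic_const,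
        nestedHarmonic_congr _ fun i hi => blockWeight_of_lt _ i.succ_pos (by omega)]
    have hrest : (fun i => blockWeight (1 - p) s (e + 1 + i))
        = blockWeight (1 - p) fun i => s (i + 1) := by
      funext i
      rw [← he, blockWeight_add _ (by omega)]
    rw [nestedHarmonic, he, binomialMean_harmonicOp, ih _ fun i hi => hs (i + 1) (by omega),
      lsum_succ', he, nestedHarmonic_add, hfirst, hrest]

theorem prod_blockWeight_pow (q : ℝ) (s : ℕ → ℕ) (d : ℕ) (hs : ∀ i < d, 1 ≤ s i) (N : ℕ → ℕ)
    (hN : ∀ i < lsum s d, N (i + 1) ≤ N i) :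
    ∏ i ∈ range (lsum s d), blockWeight q s i ^ (N i - N (i + 1))
      = ∏ r ∈ range d, q ^ (N (lsum s r + 1) - N (lsum s (r + 1))) := by
  induction d generalizing s N with
  | zero => rfl
  | succ d ih =>
    obtain ⟨e, he⟩ : ∃ e, s 0 = e + 1 := ⟨s 0 - 1, by have := hs 0 d.succ_pos; omega⟩
    have hlsum := lsum_succ' s d
    have hfirst : ∏ i ∈ range (e + 1), blockWeight q s i ^ (N i - N (i + 1))
        = q ^ (N 1 - N (e + 1)) := by
      rw [prod_range_succ', blockWeight_zero, one_pow, mul_one,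
        prod_congr rfl fun i hi => by rw [blockWeight_of_lt q i.succ_pos (by simp at hi; omega)],
        prod_pow_eq_pow_sum]
      have := sum_range_tsub_add_of_succ_le (N := fun i => N (i + 1)) (m := e)
        fun i hi => hN (i + 1) (by omega)
      rw [zero_add] at this
      congr 1
      omega
    have hshift (x : ℕ) : blockWeight q s (e + 1 + x) = blockWeight q (fun i => s (i + 1)) x := by
      rw [← he, blockWeight_add q (by omega)]
    have hrest := ih (fun i => s (i + 1)) (fun i hi => hs (i + 1) (by omega))
      (fun i => N (e + 1 + i)) fun i hi => hN (e + 1 + i) (by omega)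
    simp only [← add_assoc] at hrest
    rw [hlsum, he, prod_range_add, hfirst, prod_range_succ' _ d, mul_comm]
    simp only [hshift]
    rw [hrest]
    simp only [lsum_succ' s, lsum_zero, he, zero_add, add_zero]

theorem gencev_theorem_general (d : ℕ) (hd : 1 ≤ d) (s : ℕ → ℕ) (hs : ∀ i < d, 1 ≤ s i)
    (n : ℕ) (a p : ℝ) :
    ∑ k ∈ Finset.Icc 1 n, (n.choose k : ℝ) * p ^ k * (1 - p) ^ (n - k) *
        ∑ m ∈ chainsIcc d 1 k,
          a ^ (idx m d) / ∏ j ∈ Finset.range d, (idx m (j + 1) : ℝ) ^ s j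
      = ∑ f ∈ chainsIcc (lsum s d) 1 n,
          (∏ r ∈ Finset.range d, (1 - p) ^ (idx f (lsum s r + 1) - idx f (lsum s (r + 1)))) /
              (∏ j ∈ Finset.range (lsum s d), (idx f (j + 1) : ℝ)) *
            ((1 - p + a * p) ^ (idx f (lsum s d)) - (1 - p) ^ (idx f (lsum s d))) := by
  have hlsum_pos {r : ℕ} (hr : 1 ≤ r) : lsum s r ≠ 0 := by
    obtain ⟨r, rfl⟩ := Nat.exists_eq_add_of_le' hr
    have := hs 0 hd
    rw [lsum_succ']
    omega
  have hzeta (k : ℕ) : ∑ m ∈ chainsIcc d 1 k, a ^ idx m d / ∏ j ∈ range d, (idx m (j + 1) : ℝ) ^ s j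
      = nestedHarmonic (fun _ => 1) s d (fun k => a ^ k) k := by
    rw [nestedHarmonic_eq_sum_chainsIcc]
    refine sum_congr rfl fun m _ => ?_
    simp only [one_pow, prod_div_distrib, prod_const_one, topIdx_of_ne_zero k m (by omega : d ≠ 0),
      topIdx_of_ne_zero k m (Nat.succ_ne_zero _)]
    ring
  calc _ = binomialMean p (nestedHarmonic (fun _ => 1) s d fun k => a ^ k) n := by
        simp only [hzeta, binomialMean]
    _ = nestedHarmonic (blockWeight (1 - p) s) (fun _ => 1) (lsum s d)
          (fun m => (1 - p + a * p) ^ m - (1 - p) ^ m) n := by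
        rw [binomialMean_nestedHarmonic p s d hs, funext (binomialMean_pow p a)]
    _ = _ := by
      rw [nestedHarmonic_eq_sum_chainsIcc]
      refine sum_congr rfl fun f hf => ?_
      rw [prod_div_distrib,
        prod_blockWeight_pow _ s d hs _ fun i hi => topIdx_succ_le hf hi]
      simp only [pow_one, topIdx_of_ne_zero n f (hlsum_pos hd),
        topIdx_of_ne_zero n f (hlsum_pos (Nat.le_add_left 1 _)),
        topIdx_of_ne_zero n f (Nat.succ_ne_zero _)]

theorem gencev_theorem (d : ℕ) (hd : 1 ≤ d) (s : ℕ → ℕ) (hs : ∀ i < d, 1 ≤ s i)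
    (n : ℕ) (hn : 1 ≤ n) (a p : ℝ) :
    ∑ k ∈ Finset.Icc 1 n, (n.choose k : ℝ) * p ^ k * (1 - p) ^ (n - k) *
        ∑ m ∈ chainsIcc d 1 k,
          a ^ (idx m d) / ∏ j ∈ Finset.range d, (idx m (j + 1) : ℝ) ^ s j
      = ∑ f ∈ chainsIcc (lsum s d) 1 n,
          (∏ r ∈ Finset.range d, (1 - p) ^ (idx f (lsum s r + 1) - idx f (lsum s (r + 1)))) /
              (∏ j ∈ Finset.range (lsum s d), (idx f (j + 1) : ℝ)) *
            ((1 - p + a * p) ^ (idx f (lsum s d)) - (1 - p) ^ (idx f (lsum s d))) :=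
  gencev_theorem_general d hd s hs n a p
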